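/- For every integer n ≥ 2, the wedge-Jost set 𝒥_n = {(x₁,…,xₙ) ∈ (ℝ⁴)ⁿ : (Σ_{i=1}^{n−1} λᵢ(x_{e,i} − x_{e,i+1}))² < 0 for all λ₁,…,λ_{n−1} ≥ 0 with Σᵢλᵢ > 0} is a nonempty open cone in ℝ^{4n}, and it is symmetric under total reflection: 𝒥_n = −𝒥_n. Consequently its complement ∁𝒥_n is a closed cone with ∁𝒥_n = −∁𝒥_n. -/
import Mathlib


noncomputable section

namespace NCFT

open MeasureTheory
open scoped BigOperators

variable {ι : Type} [Fintype ι]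

/-- Componentwise real part of a point of `ℂ^ι`. -/
def reP (z : ι → ℂ) : ι → ℝ := fun i => (z i).re

/-- Componentwise imaginary part of a point of `ℂ^ι`. -/
def imP (z : ι → ℂ) : ι → ℝ := fun i => (z i).im

/-- The Euclidean norm on `ℝ^ι`. -/
def euNorm (x : ι → ℝ) : ℝ := Real.sqrt (∑ i, (x i) ^ 2)

/-- The Euclidean distance from a point to a set in `ℝ^ι`. -/
def euDist (x : ι → ℝ) (U : Set (ι → ℝ)) : ℝ :=
  sInf ((fun u => euNorm (x - u)) '' U)

/-- A cone: a set stable under positive dilations. -/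
def IsCone (C : Set (ι → ℝ)) : Prop := ∀ u ∈ C, ∀ t : ℝ, 0 < t → t • u ∈ C

/-- A nonempty open cone. -/
def IsOpenCone (U : Set (ι → ℝ)) : Prop := IsOpen U ∧ IsCone U ∧ U.Nonempty

/-- The quantity `|f(z)| (1+|x|)^N exp(-b|y| - b d(x,U))`, whose supremum over `z`
is the norm `‖f‖_{U,b,N}`. -/
def weight (U : Set (ι → ℝ)) (b : ℝ) (N : ℕ) (f : (ι → ℂ) → ℂ) (z : ι → ℂ) : ℝ :=
  ‖f z‖ * (1 + euNorm (reP z)) ^ N *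
    Real.exp (-(b * euNorm (imP z)) - b * euDist (reP z) U)

/-- The norm `‖f‖_{U,b,N}`. -/
def snorm0 (U : Set (ι → ℝ)) (b : ℝ) (N : ℕ) (f : (ι → ℂ) → ℂ) : ℝ :=
  ⨆ z : ι → ℂ, weight U b N f z

/-- Membership in `S^{0,b}(U)`: `f` is entire and all the norms `‖f‖_{U,b,N}` are finite. -/
def MemS0b (U : Set (ι → ℝ)) (b : ℝ) (f : (ι → ℂ) → ℂ) : Prop :=
  Differentiable ℂ f ∧ ∀ N : ℕ, BddAbove (Set.range (weight U b N f))

/-- Membership in `S^0(U) = ⋃_{b>0} S^{0,b}(U)`. -/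
def MemS0U (U : Set (ι → ℝ)) (f : (ι → ℂ) → ℂ) : Prop := ∃ b > 0, MemS0b U b f

/-- Membership in `S^0 = S^0(ℝ^ι)`. -/
def MemS0 (f : (ι → ℂ) → ℂ) : Prop := MemS0U Set.univ f

/-- Membership in `S^0(K)` for a closed cone `K`: membership in `S^0(U)` for some
nonempty open cone `U ⊇ K \ {0}`. -/
def MemS0K (K : Set (ι → ℝ)) (f : (ι → ℂ) → ℂ) : Prop :=
  ∃ U, IsOpenCone U ∧ K \ {0} ⊆ U ∧ MemS0U U f

/-- `v ∈ S′^0`: a linear functional on `S^0`, continuous in the sense that for every `b > 0`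
it is bounded by some norm `‖·‖_{ℝ^ι,b,N}` on `S^{0,b}(ℝ^ι)`. -/
def IsContLin (v : ((ι → ℂ) → ℂ) → ℂ) : Prop :=
  (∀ f g, MemS0 f → MemS0 g → v (f + g) = v f + v g) ∧
  (∀ (c : ℂ) (f), MemS0 f → v (c • f) = c * v f) ∧
  (∀ b : ℝ, 0 < b → ∃ N : ℕ, ∃ C : ℝ, 0 < C ∧
    ∀ f, MemS0b Set.univ b f → ‖v f‖ ≤ C * snorm0 Set.univ b N f)

/-- `v ∈ S′^0` is carried by the closed cone `K` if it has an extension `w` to `S^0(K)`,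
linear and continuous on every `S^{0,b}(U)` for every nonempty open cone `U ⊇ K \ {0}`. -/
def CarriedBy (v : ((ι → ℂ) → ℂ) → ℂ) (K : Set (ι → ℝ)) : Prop :=
  ∃ w : ((ι → ℂ) → ℂ) → ℂ,
    (∀ f g, MemS0K K f → MemS0K K g → w (f + g) = w f + w g) ∧
    (∀ (c : ℂ) (f), MemS0K K f → w (c • f) = c * w f) ∧
    (∀ f, MemS0 f → w f = v f) ∧
    ∀ U, IsOpenCone U → K \ {0} ⊆ U → ∀ b : ℝ, 0 < b → ∃ N : ℕ, ∃ C : ℝ, 0 < C ∧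
      ∀ f, MemS0b U b f → ‖w f‖ ≤ C * snorm0 U b N f

/-- The Fourier transform of (the restriction to `ℝ^ι` of) `f ∈ S^0`. -/
def fourierS0 (f : (ι → ℂ) → ℂ) : (ι → ℝ) → ℂ :=
  fun p => ∫ x : ι → ℝ, f (fun i => (x i : ℂ)) *
    Complex.exp (-Complex.I * ∑ i, (p i : ℂ) * (x i : ℂ))

/-- The Fourier transform of `v ∈ S′^0` is supported in the closed set `S`:
`v` kills every `f ∈ S^0` whose Fourier transform has support disjoint from `S`. -/
def FTSupportedIn (v : ((ι → ℂ) → ℂ) → ℂ) (S : Set (ι → ℝ)) : Prop :=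
  ∀ f, MemS0 f → Disjoint (tsupport (fourierS0 f)) S → v f = 0


/-- The difference `x_{e,i} - x_{e,i+1}` of consecutive "electrical" coordinates
`x_{e,i} = (xᵢ⁰, xᵢ¹)`, for `x ∈ (ℝ⁴)ⁿ` and `i = 0, …, n-2`. -/
def jostDiff {n : ℕ} (x : Fin n × Fin 4 → ℝ) (i : Fin (n - 1)) : ℝ × ℝ :=
  ((x (⟨i.1, by have := i.2; omega⟩, 0) - x (⟨i.1 + 1, by have := i.2; omega⟩, 0)),
   (x (⟨i.1, by have := i.2; omega⟩, 1) - x (⟨i.1 + 1, by have := i.2; omega⟩, 1)))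

/-- The 1+1-dimensional Minkowski square `ξ_e² = (ξ⁰)² - (ξ¹)²`. -/
def mink2 (ξ : ℝ × ℝ) : ℝ := ξ.1 ^ 2 - ξ.2 ^ 2

/-- The wedge-Jost set `𝒥_n`. -/
def JostSet (n : ℕ) : Set (Fin n × Fin 4 → ℝ) :=
  {x | ∀ lam : Fin (n - 1) → ℝ, (∀ i, 0 ≤ lam i) → (0 < ∑ i, lam i) →
    mink2 (∑ i, lam i • jostDiff x i) < 0}

lemma mink2_sum {n : ℕ} (x : Fin n × Fin 4 → ℝ) (lam : Fin (n - 1) → ℝ) :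
    mink2 (∑ i, lam i • jostDiff x i) =
      (∑ i, lam i * (jostDiff x i).1) ^ 2 - (∑ i, lam i * (jostDiff x i).2) ^ 2 := by
  simp [mink2, Prod.fst_sum, Prod.snd_sum, smul_eq_mul]

lemma jostSet_eq (n : ℕ) :
    JostSet n =
      {x | ∀ i, |(jostDiff x i).1| < (jostDiff x i).2} ∪
      {x | ∀ i, |(jostDiff x i).1| < -(jostDiff x i).2} := by
  ext x
  simp only [JostSet, Set.mem_union, Set.mem_setOf_eq]
  constructor
  · intro hx
    have hsp : ∀ i : Fin (n - 1), |(jostDiff x i).1| < |(jostDiff x i).2| := by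
      intro i
      have h := hx (Pi.single i 1) (fun j => by
          simp only [Pi.single_apply]; split <;> norm_num)
        (by simp [Finset.sum_pi_single'])
      rw [mink2_sum] at h
      simp only [Pi.single_apply, ite_smul, one_smul, zero_smul, ite_mul, one_mul,
        zero_mul, Finset.sum_ite_eq', Finset.mem_univ, if_true] at h
      have : |(jostDiff x i).1| ^ 2 < |(jostDiff x i).2| ^ 2 := by
        rw [sq_abs, sq_abs]; linarith
      exact lt_of_pow_lt_pow_left₀ 2 (abs_nonneg _) this
    by_contra hcon
    push_neg at hcon
    obtain ⟨⟨i, hi⟩, ⟨j, hj⟩⟩ := hcon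
    have hbi : (jostDiff x i).2 < 0 := by
      by_contra h
      push_neg at h
      have := hsp i
      rw [abs_of_nonneg h] at this
      linarith
    have hbj : 0 < (jostDiff x j).2 := by
      by_contra h
      push_neg at h
      have := hsp j
      rw [abs_of_nonpos h] at this
      linarith
    have hij : i ≠ j := by rintro rfl; linarith
    set a := fun k => (jostDiff x k).1
    set b := fun k => (jostDiff x k).2
    set lam : Fin (n - 1) → ℝ :=
      fun k => (if k = i then b j else 0) + (if k = j then -b i else 0) with hlam
    have h := hx lam
      (fun k => by simp only [hlam]; split_ifs <;> simp <;> linarith)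
      (by
        simp only [hlam, Finset.sum_add_distrib, Finset.sum_ite_eq', Finset.mem_univ, if_true]
        linarith)
    rw [mink2_sum] at h
    simp only [hlam, add_mul, ite_mul, zero_mul, Finset.sum_add_distrib,
      Finset.sum_ite_eq', Finset.mem_univ, if_true] at h
    nlinarith [sq_nonneg (b j * a i + (-b i) * a j), sq_nonneg (b j * b i + (-b i) * b j)]
  · intro hx lam hnn hsum
    have ⟨i₀, hi₀⟩ : ∃ i, 0 < lam i := by
      by_contra hc; push_neg at hc
      exact absurd (Finset.sum_nonpos fun i _ => hc i) (not_le.2 hsum)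
    rw [mink2_sum]
    set s1 := ∑ i, lam i * (jostDiff x i).1 with hs1
    set s2 := ∑ i, lam i * (jostDiff x i).2 with hs2
    have habs : |s1| ≤ ∑ i, lam i * |(jostDiff x i).1| := by
      refine (Finset.abs_sum_le_sum_abs _ _).trans ?_
      refine Finset.sum_le_sum fun i _ => ?_
      rw [abs_mul, abs_of_nonneg (hnn i)]
    have hnn2 : 0 ≤ ∑ i, lam i * |(jostDiff x i).1| :=
      Finset.sum_nonneg fun i _ => mul_nonneg (hnn i) (abs_nonneg _)
    have key : s1 ^ 2 < s2 ^ 2 := by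
      rcases hx with hx | hx
      · have hlt : ∑ i, lam i * |(jostDiff x i).1| < s2 := by
          refine Finset.sum_lt_sum (fun i _ => mul_le_mul_of_nonneg_left (hx i).le (hnn i))
            ⟨i₀, Finset.mem_univ _, mul_lt_mul_of_pos_left (hx i₀) hi₀⟩
        nlinarith [sq_abs s1, abs_nonneg s1]
      · have hlt : ∑ i, lam i * |(jostDiff x i).1| < -s2 := by
          have h2 : ∑ i, lam i * |(jostDiff x i).1| < ∑ i, lam i * (-(jostDiff x i).2) := by
            refine Finset.sum_lt_sum (fun i _ => mul_le_mul_of_nonneg_left (hx i).le (hnn i))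
              ⟨i₀, Finset.mem_univ _, mul_lt_mul_of_pos_left (hx i₀) hi₀⟩
          simpa [mul_neg, Finset.sum_neg_distrib, hs2] using h2
        nlinarith [sq_abs s1, abs_nonneg s1]
    linarith

lemma jostDiff_smul {n : ℕ} (t : ℝ) (x : Fin n × Fin 4 → ℝ) (i : Fin (n - 1)) :
    jostDiff (t • x) i = t • jostDiff x i := by
  apply Prod.ext <;> simp [jostDiff] <;> ring

lemma jostDiff_neg {n : ℕ} (x : Fin n × Fin 4 → ℝ) (i : Fin (n - 1)) :
    jostDiff (-x) i = -jostDiff x i := by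
  apply Prod.ext <;> simp [jostDiff] <;> ring

lemma mem_jostSet_neg {n : ℕ} (x : Fin n × Fin 4 → ℝ) (hx : x ∈ JostSet n) :
    -x ∈ JostSet n := by
  intro lam hnn hsum
  have h := hx lam hnn hsum
  rw [mink2_sum] at h ⊢
  simp only [jostDiff_neg, Prod.fst_neg, Prod.snd_neg, mul_neg, Finset.sum_neg_distrib, neg_sq]
  simpa using h

/-- For every `n ≥ 2` the wedge-Jost set `𝒥_n` is a nonempty open cone in
`ℝ^{4n}`, symmetric under total reflection (`𝒥_n = -𝒥_n`); consequently its complement is a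
closed cone with `∁𝒥_n = -∁𝒥_n`. -/
theorem jostSet_openCone_symm (n : ℕ) (hn : 2 ≤ n) :
    IsOpen (JostSet n) ∧ IsCone (JostSet n) ∧ (JostSet n).Nonempty ∧
    JostSet n = -(JostSet n) ∧
    IsClosed (JostSet n)ᶜ ∧ IsCone (JostSet n)ᶜ ∧ (JostSet n)ᶜ = -((JostSet n)ᶜ) := by
  have hc1 : ∀ i : Fin (n - 1), Continuous fun x : Fin n × Fin 4 → ℝ => (jostDiff x i).1 := by
    intro i
    simp only [jostDiff]
    exact (continuous_apply _).sub (continuous_apply _)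
  have hc2 : ∀ i : Fin (n - 1), Continuous fun x : Fin n × Fin 4 → ℝ => (jostDiff x i).2 := by
    intro i
    simp only [jostDiff]
    exact (continuous_apply _).sub (continuous_apply _)
  have hopen : IsOpen (JostSet n) := by
    rw [jostSet_eq]
    refine IsOpen.union ?_ ?_
    · rw [Set.setOf_forall]
      exact isOpen_iInter_of_finite fun i => isOpen_lt (hc1 i).abs (hc2 i)
    · rw [Set.setOf_forall]
      exact isOpen_iInter_of_finite fun i => isOpen_lt (hc1 i).abs (hc2 i).neg
  have hcone : IsCone (JostSet n) := by
    intro u hu t ht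
    rw [jostSet_eq] at hu ⊢
    have habs : ∀ i : Fin (n - 1), |(jostDiff (t • u) i).1| = t * |(jostDiff u i).1| := by
      intro i
      rw [jostDiff_smul, Prod.smul_fst, smul_eq_mul, abs_mul, abs_of_pos ht]
    rcases hu with hu | hu
    · left
      intro i
      rw [habs i, jostDiff_smul, Prod.smul_snd, smul_eq_mul]
      exact mul_lt_mul_of_pos_left (hu i) ht
    · right
      intro i
      rw [habs i, jostDiff_smul, Prod.smul_snd, smul_eq_mul, ← mul_neg]
      exact mul_lt_mul_of_pos_left (hu i) ht
  have hne : (JostSet n).Nonempty := by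
    refine ⟨fun p => if p.2 = 1 then -(p.1.1 : ℝ) else 0, ?_⟩
    rw [jostSet_eq]
    left
    intro i
    have : jostDiff (fun p : Fin n × Fin 4 => if p.2 = 1 then -(p.1.1 : ℝ) else 0) i = (0, 1) := by
      apply Prod.ext <;> simp [jostDiff] <;> push_cast <;> ring
    rw [this]
    norm_num
  have hsymm : JostSet n = -(JostSet n) := by
    ext x
    rw [Set.mem_neg]
    exact ⟨fun h => by simpa using mem_jostSet_neg x h, fun h => by simpa using mem_jostSet_neg _ h⟩
  have hccone : IsCone (JostSet n)ᶜ := by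
    intro u hu t ht hmem
    exact hu (by simpa [smul_smul, inv_mul_cancel₀ ht.ne'] using hcone _ hmem t⁻¹ (by positivity))
  refine ⟨hopen, hcone, hne, hsymm, hopen.isClosed_compl, hccone, ?_⟩
  ext x
  rw [Set.mem_neg, Set.mem_compl_iff, Set.mem_compl_iff]
  constructor
  · intro h h2
    exact h (by simpa using mem_jostSet_neg _ h2)
  · intro h h2
    exact h (mem_jostSet_neg _ h2)

end NCFT
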